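/- arXiv:math/0410187 — 4 statements merged into one kernel-verified Lean document; each statement's English description precedes it below -/
import Mathlib

section
/- Let R be a ring, M and N be R-modules, A a submodule of M and B a submodule of N. Then the set of R-submodules L of M × N satisfying comap inl L = A and map snd L = B is in bijection with the set of R-linear maps Hom_R(B, M ⧸ A). An explicit bijection sends an R-linear map f : B → M ⧸ A to the submodule L_f = {(m, b) : b ∈ B, the class of m in M ⧸ A equals f(b)}. -/
section Aux

variable {R M N : Type*} [Ring R] [AddCommGroup M] [AddCommGroup N]
    [Module R M] [Module R N] (A : Submodule R M) (B : Submodule R N)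

/-- The submodule `L_f` associated to `f`. -/
def auxL (f : B →ₗ[R] M ⧸ A) : Submodule R (M × N) where
  carrier := {p | ∃ hb : p.2 ∈ B, A.mkQ p.1 = f ⟨p.2, hb⟩}
  zero_mem' := ⟨B.zero_mem, by
    show A.mkQ 0 = f 0
    rw [map_zero, map_zero]⟩
  add_mem' := by
    rintro ⟨a, b⟩ ⟨c, d⟩ ⟨hb, hfb⟩ ⟨hd, hfd⟩
    refine ⟨B.add_mem hb hd, ?_⟩
    show A.mkQ (a + c) = f (⟨b, hb⟩ + ⟨d, hd⟩)
    rw [map_add, map_add, ← hfb, ← hfd]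
  smul_mem' := by
    rintro r ⟨a, b⟩ ⟨hb, hfb⟩
    refine ⟨B.smul_mem r hb, ?_⟩
    show A.mkQ (r • a) = f (r • ⟨b, hb⟩)
    rw [map_smul, map_smul, ← hfb]

lemma auxL_mem (f : B →ₗ[R] M ⧸ A) (p : M × N) :
    p ∈ auxL A B f ↔ ∃ hb : p.2 ∈ B, A.mkQ p.1 = f ⟨p.2, hb⟩ := Iff.rfl

lemma auxL_comap (f : B →ₗ[R] M ⧸ A) :
    Submodule.comap (LinearMap.inl R M N) (auxL A B f) = A := by
  ext m
  simp only [Submodule.mem_comap, LinearMap.inl_apply, auxL_mem]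
  constructor
  · rintro ⟨hb, h⟩
    have h' : A.mkQ m = f 0 := h
    rw [map_zero] at h'
    exact (Submodule.Quotient.mk_eq_zero A).mp h'
  · intro hm
    refine ⟨B.zero_mem, ?_⟩
    show A.mkQ m = f 0
    rw [map_zero]
    exact (Submodule.Quotient.mk_eq_zero A).mpr hm
lemma auxL_map (f : B →ₗ[R] M ⧸ A) :
    Submodule.map (LinearMap.snd R M N) (auxL A B f) = B := by
  ext n
  simp only [Submodule.mem_map, LinearMap.snd_apply]
  constructor
  · rintro ⟨⟨m, n'⟩, ⟨hb, _⟩, rfl⟩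
    exact hb
  · intro hn
    obtain ⟨m, hm⟩ := A.mkQ_surjective (f ⟨n, hn⟩)
    exact ⟨(m, n), ⟨hn, hm⟩, rfl⟩

variable {A B} in
lemma aux_welldef {L : Submodule R (M × N)}
    (hA : Submodule.comap (LinearMap.inl R M N) L = A)
    {m m' : M} {n : N} (h1 : (m, n) ∈ L) (h2 : (m', n) ∈ L) :
    A.mkQ m = A.mkQ m' := by
  have hmem : m - m' ∈ A := by
    rw [← hA]
    have := L.sub_mem h1 h2
    simpa using this
  rwa [← sub_eq_zero, ← map_sub, Submodule.mkQ_apply, Submodule.Quotient.mk_eq_zero]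

variable {B} in
lemma pick_ex (L : Submodule R (M × N))
    (hB : Submodule.map (LinearMap.snd R M N) L = B) (b : B) :
    ∃ m, (m, (b : N)) ∈ L := by
  have hb : (b : N) ∈ Submodule.map (LinearMap.snd R M N) L := hB ▸ b.2
  obtain ⟨⟨m, n⟩, hm, rfl⟩ := hb
  exact ⟨m, hm⟩

variable {B} in
/-- A choice of preimage. -/
noncomputable def pick (L : Submodule R (M × N))
    (hB : Submodule.map (LinearMap.snd R M N) L = B) (b : B) : M :=
  Classical.choose (pick_ex L hB b)

variable {B} in
lemma pick_mem (L : Submodule R (M × N))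
    (hB : Submodule.map (LinearMap.snd R M N) L = B) (b : B) :
    (pick L hB b, (b : N)) ∈ L :=
  Classical.choose_spec (pick_ex L hB b)

/-- The inverse construction. -/
noncomputable def auxG (L : Submodule R (M × N))
    (hA : Submodule.comap (LinearMap.inl R M N) L = A)
    (hB : Submodule.map (LinearMap.snd R M N) L = B) :
    B →ₗ[R] M ⧸ A where
  toFun b := A.mkQ (pick L hB b)
  map_add' b c := by
    have h4 : (pick L hB b + pick L hB c, ((b + c : B) : N)) ∈ L :=
      L.add_mem (pick_mem L hB b) (pick_mem L hB c)
    show A.mkQ (pick L hB (b + c)) = A.mkQ (pick L hB b) + A.mkQ (pick L hB c)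
    rw [aux_welldef hA (pick_mem L hB (b + c)) h4, map_add]
  map_smul' r b := by
    have h4 : (r • pick L hB b, ((r • b : B) : N)) ∈ L :=
      L.smul_mem r (pick_mem L hB b)
    show A.mkQ (pick L hB (r • b)) = r • A.mkQ (pick L hB b)
    rw [aux_welldef hA (pick_mem L hB (r • b)) h4, map_smul]

variable {A B} in
lemma auxG_spec {L : Submodule R (M × N)}
    (hA : Submodule.comap (LinearMap.inl R M N) L = A)
    (hB : Submodule.map (LinearMap.snd R M N) L = B)
    (b : B) {m : M} (hm : (m, (b : N)) ∈ L) :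
    auxG A B L hA hB b = A.mkQ m :=
  aux_welldef hA (pick_mem L hB b) hm

end Aux

/-- The set of `R`-submodules `L` of `M × N` with `comap inl L = A` and `map snd L = B`
is in bijection with `Hom_R(B, M ⧸ A)`; the bijection sends `f` to
`L_f = {(m, b) : b ∈ B, class of m in M ⧸ A equals f b}`. -/
theorem stmt0 (R M N : Type*) [Ring R] [AddCommGroup M] [AddCommGroup N]
    [Module R M] [Module R N] (A : Submodule R M) (B : Submodule R N) :
    ∃ e : (B →ₗ[R] M ⧸ A) ≃
        {L : Submodule R (M × N) //
          Submodule.comap (LinearMap.inl R M N) L = A ∧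
          Submodule.map (LinearMap.snd R M N) L = B},
      ∀ (f : B →ₗ[R] M ⧸ A) (p : M × N),
        p ∈ (e f : Submodule R (M × N)) ↔
          ∃ hb : p.2 ∈ B, A.mkQ p.1 = f ⟨p.2, hb⟩ := by
  classical
  refine ⟨{
    toFun := fun f => ⟨auxL A B f, auxL_comap A B f, auxL_map A B f⟩
    invFun := fun L => auxG A B L.1 L.2.1 L.2.2
    left_inv := ?_
    right_inv := ?_ }, fun f p => Iff.rfl⟩
  · intro f
    ext b
    obtain ⟨m, hm⟩ := A.mkQ_surjective (f b)
    have hmem : (m, (b : N)) ∈ auxL A B f := ⟨b.2, by simpa using hm⟩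
    rw [auxG_spec _ _ b hmem, hm]
  · rintro ⟨L, hA, hB⟩
    ext p
    simp only [auxL_mem]
    constructor
    · rintro ⟨hb, h⟩
      obtain ⟨q, hq, hq2⟩ :=
        (show p.2 ∈ Submodule.map (LinearMap.snd R M N) L from hB ▸ hb)
      simp only [LinearMap.snd_apply] at hq2
      have hm : (q.1, p.2) ∈ L := by
        have he : (q.1, p.2) = q := Prod.ext rfl hq2.symm
        rw [he]; exact hq
      rw [auxG_spec hA hB ⟨p.2, hb⟩ hm] at h
      have hsub : p.1 - q.1 ∈ A := by
        rwa [← Submodule.Quotient.mk_eq_zero A, Submodule.Quotient.mk_sub,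
          sub_eq_zero]
      have h0 : (p.1 - q.1, (0 : N)) ∈ L := by rw [← hA] at hsub; exact hsub
      have := L.add_mem h0 hm
      simpa using this
    · intro hp
      have hb : p.2 ∈ B := by
        rw [← hB]; exact ⟨p, hp, rfl⟩
      exact ⟨hb, (auxG_spec hA hB ⟨p.2, hb⟩ hp).symm⟩
end

section
/- Let R be a ring, M and N be R-modules, A a submodule of M and B a submodule of N, and let L be an R-submodule of M × N satisfying comap inl L = A and map snd L = B. Then: (1) for every b ∈ B there exists m ∈ M with (m, b) ∈ L; (2) if (m, b) ∈ L and (m', b) ∈ L then m - m' ∈ A, so the class of m in M ⧸ A depends only on b; and (3) the resulting map f_L : B → M ⧸ A, sending b to the class of any m with (m, b) ∈ L, is R-linear. -/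
/-!
Restricting `snd` to `L` gives a surjection `L → map snd L` whose kernel consists of the
elements `(m, 0)` of `L`, i.e. of the pairs with `m ∈ comap inl L`. Hence `mkQ ∘ fst` on `L`
vanishes on this kernel and descends, by the first isomorphism theorem, to a linear map
`map snd L → M ⧸ comap inl L`.
-/

namespace Submodule

variable {R M N : Type*} [Ring R] [AddCommGroup M] [AddCommGroup N] [Module R M] [Module R N]
  (L : Submodule R (M × N))

theorem exists_mk_mem_of_mem_map_snd {b : N} (hb : b ∈ L.map (LinearMap.snd R M N)) :
    ∃ m : M, (m, b) ∈ L := by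
  obtain ⟨⟨m, b⟩, hmb, rfl⟩ := hb
  exact ⟨m, hmb⟩

variable {L} in
theorem sub_mem_comap_inl {m m' : M} {b : N} (h : (m, b) ∈ L) (h' : (m', b) ∈ L) :
    m - m' ∈ L.comap (LinearMap.inl R M N) := by
  simpa using L.sub_mem h h'

theorem ker_submoduleMap_snd_le :
    LinearMap.ker ((LinearMap.snd R M N).submoduleMap L) ≤
      LinearMap.ker ((L.comap (LinearMap.inl R M N)).mkQ ∘ₗ LinearMap.fst R M N ∘ₗ L.subtype) := by
  rintro ⟨⟨m, b⟩, hmb⟩ hb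
  obtain rfl : b = 0 := congrArg Subtype.val hb
  simpa using hmb

noncomputable def sndQuotientMap :
    L.map (LinearMap.snd R M N) →ₗ[R] M ⧸ L.comap (LinearMap.inl R M N) :=
  (LinearMap.ker _).liftQ _ L.ker_submoduleMap_snd_le ∘ₗ
    (((LinearMap.snd R M N).submoduleMap L).quotKerEquivOfSurjective
      ((LinearMap.snd R M N).submoduleMap_surjective L)).symm.toLinearMap

theorem sndQuotientMap_apply {m : M} {b : N} (h : (m, b) ∈ L) :
    L.sndQuotientMap ⟨b, mem_map_of_mem h⟩ = (L.comap (LinearMap.inl R M N)).mkQ m := by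
  have hb : (⟨b, mem_map_of_mem h⟩ : L.map (LinearMap.snd R M N)) =
      (LinearMap.snd R M N).submoduleMap L ⟨(m, b), h⟩ := rfl
  simp [sndQuotientMap, hb]

end Submodule

/-- If `L ≤ M × N` satisfies `comap inl L = A` and `map snd L = B`, then:
(1) every `b ∈ B` lifts to some `(m, b) ∈ L`;
(2) if `(m, b) ∈ L` and `(m', b) ∈ L` then `m - m' ∈ A`;
(3) the induced map `f_L : B → M ⧸ A`, sending `b` to the class of any `m` with
`(m, b) ∈ L`, is `R`-linear. -/
theorem stmt1 (R M N : Type*) [Ring R] [AddCommGroup M] [AddCommGroup N]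
    [Module R M] [Module R N] (A : Submodule R M) (B : Submodule R N)
    (L : Submodule R (M × N))
    (hA : Submodule.comap (LinearMap.inl R M N) L = A)
    (hB : Submodule.map (LinearMap.snd R M N) L = B) :
    (∀ b ∈ B, ∃ m : M, (m, b) ∈ L) ∧
    (∀ (m m' : M) (b : N), (m, b) ∈ L → (m', b) ∈ L → m - m' ∈ A) ∧
    (∃ f : B →ₗ[R] M ⧸ A, ∀ (b : B) (m : M), (m, (b : N)) ∈ L → f b = A.mkQ m) := by
  subst hA hB
  exact ⟨fun _ ↦ L.exists_mk_mem_of_mem_map_snd, fun _ _ _ ↦ Submodule.sub_mem_comap_inl,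
    L.sndQuotientMap, fun _ _ ↦ L.sndQuotientMap_apply⟩
end

section
/- Let R be a ring and M, N be R-modules. There is a bijection between the set of all R-submodules of M × N and the set of triples (A, B, f) where A is a submodule of M, B is a submodule of N, and f : B → M ⧸ A is an R-linear map; moreover the bijection can be chosen so that a submodule L of M × N corresponds to a triple whose first component is comap inl L and whose second component is map snd L. In particular, the map L ↦ (comap inl L, map snd L) from submodules of M × N to pairs of submodules of M and N is surjective. -/
/-!
A triple `(A, B, f)` determines the submodule `{(m, n) | n ∈ B, f n = m mod A}` of `M × N`:
it is the preimage of the graph of the partial map `f : N →ₗ.[R] M ⧸ A` under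
`(m, n) ↦ (n, m mod A)`. Conversely, every `L` is of this form with `A = {m | (m, 0) ∈ L}`:
the image of `L` under `(m, n) ↦ (n, m mod A)` meets `0 × (M ⧸ A)` only in `0`, so it is the graph
of a partial linear map, and `L` is the full preimage of that image because it contains the
kernel `A × 0`. The triple is recovered from the submodule, since `A` and `B` are read off as
`comap inl` and `map snd`, and then `f` from its graph.
-/

open LinearMap

namespace Submodule

variable {R M N : Type*} [Ring R] [AddCommGroup M] [AddCommGroup N] [Module R M] [Module R N]

variable (N) in
def swapMkQ (A : Submodule R M) : M × N →ₗ[R] N × (M ⧸ A) :=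
  (LinearMap.snd R M N).prod (A.mkQ ∘ₗ LinearMap.fst R M N)

@[simp]
theorem swapMkQ_apply (A : Submodule R M) (x : M × N) :
    swapMkQ N A x = (x.2, A.mkQ x.1) :=
  rfl

theorem swapMkQ_surjective (A : Submodule R M) : Function.Surjective (swapMkQ N A) := by
  rintro ⟨n, q⟩
  obtain ⟨m, rfl⟩ := A.mkQ_surjective q
  exact ⟨(m, n), rfl⟩

theorem ker_swapMkQ (A : Submodule R M) : ker (swapMkQ N A) = A.map (inl R M N) := by
  ext ⟨m, n⟩
  simp [Prod.ext_iff, and_comm, Quotient.mk_eq_zero]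

def prodOfTriple (t : Σ A : Submodule R M, Σ B : Submodule R N, (B →ₗ[R] M ⧸ A)) :
    Submodule R (M × N) :=
  (LinearPMap.graph ⟨t.2.1, t.2.2⟩).comap (swapMkQ N t.1)

theorem comap_inl_prodOfTriple (t : Σ A : Submodule R M, Σ B : Submodule R N, (B →ₗ[R] M ⧸ A)) :
    (prodOfTriple t).comap (inl R M N) = t.1 := by
  ext m
  constructor
  · intro hm
    simpa using LinearPMap.graph_fst_eq_zero_snd _ hm (by simp)
  · intro hm
    simp [prodOfTriple, (Quotient.mk_eq_zero t.1).2 hm]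

theorem map_snd_prodOfTriple (t : Σ A : Submodule R M, Σ B : Submodule R N, (B →ₗ[R] M ⧸ A)) :
    (prodOfTriple t).map (LinearMap.snd R M N) = t.2.1 := by
  have hsnd : LinearMap.snd R M N = LinearMap.fst R N (M ⧸ t.1) ∘ₗ swapMkQ N t.1 := rfl
  rw [prodOfTriple, hsnd, map_comp, map_comap_eq_of_surjective (swapMkQ_surjective t.1),
    LinearPMap.graph_map_fst_eq_domain]

theorem prodOfTriple_injective :
    Function.Injective (prodOfTriple (R := R) (M := M) (N := N)) := by
  rintro ⟨A, B, f⟩ ⟨A', B', f'⟩ h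
  obtain rfl : A = A' := by
    simpa only [comap_inl_prodOfTriple] using congr_arg (comap (inl R M N)) h
  have hgraph := comap_injective_of_surjective (swapMkQ_surjective A) h
  cases LinearPMap.eq_of_eq_graph hgraph
  rfl

theorem prodOfTriple_surjective :
    Function.Surjective (prodOfTriple (R := R) (M := M) (N := N)) := by
  intro L
  set A := L.comap (inl R M N)
  have hgraph : ∀ x ∈ L.map (swapMkQ N A), x.1 = 0 → x.2 = 0 := by
    rintro _ ⟨⟨m, n⟩, hmn, rfl⟩ (rfl : n = 0)
    simpa using (Quotient.mk_eq_zero A).2 hmn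
  let f := (L.map (swapMkQ N A)).toLinearPMap
  refine ⟨⟨A, f.domain, f.toFun⟩, ?_⟩
  have hker : ker (swapMkQ N A) ≤ L := by
    rw [ker_swapMkQ]
    exact map_le_iff_le_comap.2 le_rfl
  change (LinearPMap.graph f).comap _ = L
  rw [toLinearPMap_graph_eq _ hgraph, comap_map_eq, sup_eq_left.2 hker]

end Submodule

/-- The set of `R`-submodules of `M × N` is in bijection with the set of triples
`(A, B, f)` with `A ≤ M`, `B ≤ N` and `f : B →ₗ[R] M ⧸ A`, the bijection sending `L`
to a triple with first component `comap inl L` and second component `map snd L`.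
In particular `L ↦ (comap inl L, map snd L)` is surjective. -/
theorem stmt2 (R M N : Type*) [Ring R] [AddCommGroup M] [AddCommGroup N]
    [Module R M] [Module R N] :
    (∃ e : Submodule R (M × N) ≃
        Σ A : Submodule R M, Σ B : Submodule R N, (B →ₗ[R] M ⧸ A),
      ∀ L : Submodule R (M × N),
        (e L).1 = Submodule.comap (LinearMap.inl R M N) L ∧
        (e L).2.1 = Submodule.map (LinearMap.snd R M N) L) ∧
    Function.Surjective (fun L : Submodule R (M × N) =>
      (Submodule.comap (LinearMap.inl R M N) L,
       Submodule.map (LinearMap.snd R M N) L)) := by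
  let e := Equiv.ofBijective _ ⟨Submodule.prodOfTriple_injective (R := R) (M := M) (N := N),
    Submodule.prodOfTriple_surjective⟩
  refine ⟨⟨e.symm, fun L => ?_⟩, fun ⟨A, B⟩ => ⟨Submodule.prodOfTriple ⟨A, B, 0⟩, ?_⟩⟩
  · have hL : Submodule.prodOfTriple (e.symm L) = L := e.apply_symm_apply L
    rw [← hL, Submodule.comap_inl_prodOfTriple, Submodule.map_snd_prodOfTriple, hL]
    exact ⟨rfl, rfl⟩
  · simp only [Submodule.comap_inl_prodOfTriple, Submodule.map_snd_prodOfTriple]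
end

section
/- Let k be a finite field with q elements, R an associative unital k-algebra, and M, N R-modules that are finite-dimensional as k-vector spaces. Fix an R-submodule A of M and an R-submodule B of N. Then the number of R-submodules L of M × N satisfying comap inl L = A and map snd L = B equals q raised to the power dim_k Hom_R(B, M ⧸ A), where Hom_R(B, M ⧸ A) is the k-vector space of R-linear maps from B to M ⧸ A. -/
open Submodule

/-- The "graph" submodule of `M × N` associated to a linear map `f : B →ₗ[R] M ⧸ A`. -/
def graphSub {R M N : Type*} [Ring R] [AddCommGroup M] [Module R M]
    [AddCommGroup N] [Module R N] (A : Submodule R M) (B : Submodule R N)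
    (f : B →ₗ[R] M ⧸ A) : Submodule R (M × N) where
  carrier := {p | ∃ h : p.2 ∈ B, Submodule.Quotient.mk p.1 = f ⟨p.2, h⟩}
  add_mem' := by
    rintro p q ⟨h1, e1⟩ ⟨h2, e2⟩
    refine ⟨add_mem h1 h2, ?_⟩
    show Submodule.Quotient.mk (p.1 + q.1) = f (⟨p.2, h1⟩ + ⟨q.2, h2⟩)
    rw [map_add, ← e1, ← e2, Submodule.Quotient.mk_add]
  zero_mem' := ⟨zero_mem B, by show Submodule.Quotient.mk (0 : M) = f 0; rw [map_zero, Submodule.Quotient.mk_zero]⟩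
  smul_mem' := by
    rintro r p ⟨h, e⟩
    refine ⟨Submodule.smul_mem B r h, ?_⟩
    show Submodule.Quotient.mk (r • p.1) = f (r • (⟨p.2, h⟩ : B))
    rw [map_smul, ← e, Submodule.Quotient.mk_smul]

/-- Over a finite field `k` with `q` elements, for an associative unital `k`-algebra `R`
and `R`-modules `M, N` finite-dimensional over `k`, the number of `R`-submodules `L` of
`M × N` with `comap inl L = A` and `map snd L = B` is `q ^ dim_k Hom_R(B, M ⧸ A)`. -/
theorem stmt3 (k R M N : Type*) [Field k] [Fintype k] [Ring R] [Algebra k R]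
    [AddCommGroup M] [Module R M] [Module k M] [IsScalarTower k R M]
    [AddCommGroup N] [Module R N] [Module k N] [IsScalarTower k R N]
    [FiniteDimensional k M] [FiniteDimensional k N]
    (A : Submodule R M) (B : Submodule R N) :
    Nat.card {L : Submodule R (M × N) //
        Submodule.comap (LinearMap.inl R M N) L = A ∧
        Submodule.map (LinearMap.snd R M N) L = B}
      = Fintype.card k ^ Module.finrank k (B →ₗ[R] M ⧸ A) := by
  classical
  -- `graphSub A B f` has the required properties
  have key : ∀ f : B →ₗ[R] M ⧸ A,
      Submodule.comap (LinearMap.inl R M N) (graphSub A B f) = A ∧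
      Submodule.map (LinearMap.snd R M N) (graphSub A B f) = B := by
    intro f
    constructor
    · ext m
      simp only [Submodule.mem_comap, LinearMap.inl_apply]
      constructor
      · rintro ⟨h, e⟩
        have h0 : (⟨(0 : N), h⟩ : B) = 0 := rfl
        rw [h0, map_zero] at e
        exact (Submodule.Quotient.mk_eq_zero A).mp e
      · intro hm
        refine ⟨zero_mem B, ?_⟩
        have h0 : (⟨(0 : N), zero_mem B⟩ : B) = 0 := rfl
        rw [h0, map_zero]
        exact (Submodule.Quotient.mk_eq_zero A).mpr hm
    · ext n
      simp only [Submodule.mem_map, LinearMap.snd_apply]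
      constructor
      · rintro ⟨⟨m, n'⟩, ⟨h, e⟩, rfl⟩; exact h
      · intro hn
        obtain ⟨m, hm⟩ := Submodule.Quotient.mk_surjective A (f ⟨n, hn⟩)
        exact ⟨(m, n), ⟨hn, hm⟩, rfl⟩
  let Φ : (B →ₗ[R] M ⧸ A) →
      {L : Submodule R (M × N) //
        Submodule.comap (LinearMap.inl R M N) L = A ∧
        Submodule.map (LinearMap.snd R M N) L = B} :=
    fun f => ⟨graphSub A B f, key f⟩
  have hΦ : Function.Bijective Φ := by
    constructor
    · intro f g hfg
      have hfg' : graphSub A B f = graphSub A B g := congrArg Subtype.val hfg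
      ext b
      obtain ⟨n, hn⟩ := b
      obtain ⟨m, hm⟩ := Submodule.Quotient.mk_surjective A (f ⟨n, hn⟩)
      have h1 : (m, n) ∈ graphSub A B f := ⟨hn, hm⟩
      rw [hfg'] at h1
      obtain ⟨h, e⟩ := h1
      rw [← hm, e]
    · rintro ⟨L, hA, hB⟩
      -- projection to `B`
      let p2 : L →ₗ[R] B :=
        LinearMap.codRestrict B ((LinearMap.snd R M N).comp L.subtype)
          (fun x => by rw [← hB]; exact ⟨(x : M × N), x.2, rfl⟩)
      have hsurj : Function.Surjective p2 := by
        intro b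
        have hb : (b : N) ∈ Submodule.map (LinearMap.snd R M N) L := by rw [hB]; exact b.2
        obtain ⟨x, hx, hxe⟩ := hb
        exact ⟨⟨x, hx⟩, Subtype.ext hxe⟩
      let g : L →ₗ[R] M ⧸ A := A.mkQ ∘ₗ (LinearMap.fst R M N).comp L.subtype
      have hle : LinearMap.ker p2 ≤ LinearMap.ker g := by
        intro x hx
        have hx2 : (x : M × N).2 = 0 := congrArg Subtype.val hx
        have hmem : ((x : M × N).1, (0 : N)) ∈ L := by
          have := x.2
          rwa [show (x : M × N) = ((x : M × N).1, (0 : N)) from Prod.ext rfl hx2] at this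
        have hA' : (x : M × N).1 ∈ A := by rw [← hA]; exact hmem
        simpa [g, LinearMap.mem_ker, Submodule.Quotient.mk_eq_zero] using hA'
      let e := p2.quotKerEquivOfSurjective hsurj
      let f : B →ₗ[R] M ⧸ A := (LinearMap.ker p2).liftQ g hle ∘ₗ (e.symm : B →ₗ[R] _)
      have hfp2 : ∀ x : L, f (p2 x) = Submodule.Quotient.mk (x : M × N).1 := by
        intro x
        have he : e (Submodule.Quotient.mk x) = p2 x := rfl
        have he' : e.symm (p2 x) = Submodule.Quotient.mk x := by
          rw [← he, LinearEquiv.symm_apply_apply]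
        show (LinearMap.ker p2).liftQ g hle (e.symm (p2 x)) = _
        rw [he', Submodule.liftQ_apply]
        rfl
      refine ⟨f, Subtype.ext ?_⟩
      show graphSub A B f = L
      ext ⟨m, n⟩
      constructor
      · rintro ⟨hn, hmk⟩
        obtain ⟨x, hx⟩ := hsurj ⟨n, hn⟩
        have hxn : (x : M × N).2 = n := congrArg Subtype.val hx
        have hmm : Submodule.Quotient.mk (x : M × N).1 = (Submodule.Quotient.mk m : M ⧸ A) := by
          rw [← hfp2 x, hx, ← hmk]
        have hdiff : m - (x : M × N).1 ∈ A := by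
          have h2 := hmm.symm
          rwa [Submodule.Quotient.eq] at h2
        have hdmem : (m - (x : M × N).1, (0 : N)) ∈ L := by
          rw [← hA] at hdiff; exact hdiff
        have hsum : (m - (x : M × N).1, (0 : N)) + (x : M × N) ∈ L := add_mem hdmem x.2
        have heq : (m - (x : M × N).1, (0 : N)) + (x : M × N) = (m, n) := by
          have := hxn
          ext
          · simp
          · simpa using this
        rwa [heq] at hsum
      · intro hL
        have hn : n ∈ B := by rw [← hB]; exact ⟨(m, n), hL, rfl⟩
        refine ⟨hn, ?_⟩
        have : (⟨n, hn⟩ : B) = p2 ⟨(m, n), hL⟩ := rfl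
        rw [this, hfp2 ⟨(m, n), hL⟩]
  -- finiteness of the Hom space
  haveI : FiniteDimensional k ↥B :=
    FiniteDimensional.of_injective ((B.subtype).restrictScalars k) Subtype.val_injective
  haveI : FiniteDimensional k (M ⧸ A) :=
    Module.Finite.of_surjective ((A.mkQ).restrictScalars k) (Submodule.mkQ_surjective A)
  haveI : FiniteDimensional k (B →ₗ[R] M ⧸ A) :=
    FiniteDimensional.of_injective (LinearMap.restrictScalarsₗ k R ↥B (M ⧸ A) k)
      (LinearMap.restrictScalars_injective k)
  haveI : Finite (B →ₗ[R] M ⧸ A) := Module.finite_of_finite k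
  haveI : Fintype (B →ₗ[R] M ⧸ A) := Fintype.ofFinite _
  rw [Nat.card_congr (Equiv.ofBijective Φ hΦ).symm, Nat.card_eq_fintype_card,
    Module.card_eq_pow_finrank (K := k)]
end
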